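/- arXiv:2605.15750 — 7 statements merged into one kernel-verified Lean document; each statement's English description precedes it below -/
import Mathlib

section
/- Let E be a nonempty finite set of EVs, let p_port > 0 be the port rating, p_CS > 0 the station power cap, and for each i in E let the request r_i be a real number with 0 < r_i ≤ p_port, each EV i having utility u_i(x) = min(x / r_i, 1). Suppose ω ≥ 0 is a real number and define the water-filling allocation p_i = min(ω, r_i) for each i in E, and suppose that ∑_{i∈E} p_i = min(p_CS, ∑_{i∈E} r_i). Then p is a feasible allocation (0 ≤ p_i ≤ p_port for all i and ∑_{i∈E} p_i ≤ p_CS) and p is a fair allocation, i.e. it is simultaneously: (1) envy-free: u_i(p_i) ≥ u_i(p_j) for all i, j ∈ E; (2) Pareto efficient: for every feasible allocation p', if u_i(p'_i) > u_i(p_i) for some i ∈ E then u_k(p'_k) < u_k(p_k) for some k ∈ E; and (3) proportional: u_i(p_i) ≥ u_i(p_CS) / |E| for all i ∈ E. -/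
/-!
Since `min (x / r) 1 = min x r / r`, every utility comparison for EV `i` is a comparison of
the truncated powers `min x (r i)`. Envy-freeness is then immediate. For Pareto efficiency,
a feasible `p'` that nobody likes less satisfies `p k ≤ min (p' k) (r k)` for all `k`, while
`∑ min (p' k) (r k) ≤ min (∑ p') (∑ r) ≤ min p_CS (∑ r) = ∑ p`; so all these inequalities are
equalities and nobody is strictly better off. For proportionality,
`min p_CS (r i) ≤ min p_CS (∑ r) = ∑ p ≤ |E| ω` and `min p_CS (r i) ≤ |E| r i`, hence
`min p_CS (r i) ≤ |E| p i`.
-/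

open Finset

lemma min_div_one_eq_min_div {r : ℝ} (hr : 0 < r) (x : ℝ) : min (x / r) 1 = min x r / r := by
  rw [← min_div_div_right hr.le, div_self hr.ne']

section

variable {ι : Type*} {s : Finset ι}

lemma eq_min_of_le_min_of_sum_eq_min_sum {C : ℝ} {p q r : ι → ℝ}
    (hsum : ∑ i ∈ s, p i = min C (∑ i ∈ s, r i)) (hq : ∑ i ∈ s, q i ≤ C)
    (hle : ∀ i ∈ s, p i ≤ min (q i) (r i)) : ∀ i ∈ s, p i = min (q i) (r i) := by
  refine (sum_eq_sum_iff_of_le hle).1 (le_antisymm (sum_le_sum hle) ?_)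
  calc ∑ i ∈ s, min (q i) (r i)
      ≤ min (∑ i ∈ s, q i) (∑ i ∈ s, r i) := sum_min_le
    _ ≤ min C (∑ i ∈ s, r i) := min_le_min_right _ hq
    _ = ∑ i ∈ s, p i := hsum.symm

lemma min_le_card_mul_min_of_sum_min_eq {C ω : ℝ} {r : ι → ℝ} (hr : ∀ i ∈ s, 0 ≤ r i)
    (hsum : ∑ i ∈ s, min ω (r i) = min C (∑ i ∈ s, r i)) {i : ι} (hi : i ∈ s) :
    min C (r i) ≤ #s * min ω (r i) := by
  rw [mul_min_of_nonneg _ _ (Nat.cast_nonneg _)]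
  refine le_min ?_ ?_
  · calc min C (r i)
        ≤ min C (∑ j ∈ s, r j) := min_le_min_left _ (single_le_sum hr hi)
      _ = ∑ j ∈ s, min ω (r j) := hsum.symm
      _ ≤ #s * ω := by
        simpa using sum_le_card_nsmul s _ ω fun j _ => min_le_left ω (r j)
  · have hcard : (1 : ℝ) ≤ #s := Nat.one_le_cast.2 (card_pos.2 ⟨i, hi⟩)
    exact (min_le_right _ _).trans (le_mul_of_one_le_left (hr i hi) hcard)

end

theorem waterfilling_fair_conventional_general {ι : Type*} (E : Finset ι)
    (pport pCS : ℝ)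
    (r : ι → ℝ) (hr : ∀ i ∈ E, 0 < r i ∧ r i ≤ pport)
    (u : ι → ℝ → ℝ) (hu : ∀ i, ∀ x : ℝ, u i x = min (x / r i) 1)
    (ω : ℝ) (hω : 0 ≤ ω)
    (p : ι → ℝ) (hp : ∀ i ∈ E, p i = min ω (r i))
    (hsum : ∑ i ∈ E, p i = min pCS (∑ i ∈ E, r i)) :
    -- feasibility
    ((∀ i ∈ E, 0 ≤ p i ∧ p i ≤ pport) ∧ ∑ i ∈ E, p i ≤ pCS) ∧
    -- (1) envy-freeness
    (∀ i ∈ E, ∀ j ∈ E, u i (p i) ≥ u i (p j)) ∧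
    -- (2) Pareto efficiency
    (∀ p' : ι → ℝ, (∀ i ∈ E, 0 ≤ p' i ∧ p' i ≤ pport) → (∑ i ∈ E, p' i ≤ pCS) →
      (∃ i ∈ E, u i (p' i) > u i (p i)) → ∃ k ∈ E, u k (p' k) < u k (p k)) ∧
    -- (3) proportionality
    (∀ i ∈ E, u i (p i) ≥ u i pCS / (E.card : ℝ)) := by
  have hpos : ∀ i ∈ E, 0 < r i := fun i hi => (hr i hi).1
  have hu' : ∀ i ∈ E, ∀ x, u i x = min x (r i) / r i := fun i hi x => by
    rw [hu, min_div_one_eq_min_div (hpos i hi)]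
  have hpr : ∀ i ∈ E, min (p i) (r i) = p i := fun i hi =>
    min_eq_left (hp i hi ▸ min_le_right _ _)
  refine ⟨⟨fun i hi => ?_, hsum ▸ min_le_left _ _⟩, fun i hi j hj => ?_,
    fun p' _ hp'sum => ?_, fun i hi => ?_⟩
  · rw [hp i hi]
    exact ⟨le_min hω (hpos i hi).le, (min_le_right _ _).trans (hr i hi).2⟩
  · rw [ge_iff_le, hu' i hi, hu' i hi, div_le_div_iff_of_pos_right (hpos i hi), hpr i hi,
      hp i hi, hp j hj]
    exact min_le_min (min_le_left _ _) le_rfl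
  · rintro ⟨i, hi, hgt⟩
    by_contra! hnone
    have hle : ∀ k ∈ E, p k ≤ min (p' k) (r k) := fun k hk => by
      simpa only [hu' k hk, div_le_div_iff_of_pos_right (hpos k hk), hpr k hk] using hnone k hk
    rw [hu' i hi, hu' i hi, hpr i hi,
      eq_min_of_le_min_of_sum_eq_min_sum hsum hp'sum hle i hi] at hgt
    exact lt_irrefl _ hgt
  · have hcard : (0 : ℝ) < #E := Nat.cast_pos.2 (card_pos.2 ⟨i, hi⟩)
    have hkey := min_le_card_mul_min_of_sum_min_eq (fun j hj => (hpos j hj).le)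
      ((sum_congr rfl hp).symm.trans hsum) hi
    rw [← hp i hi] at hkey
    rw [ge_iff_le, hu' i hi, hu' i hi, hpr i hi, div_le_iff₀ hcard, div_mul_eq_mul_div,
      div_le_div_iff_of_pos_right (hpos i hi), mul_comm]
    exact hkey

/-- The water-filling allocation `p i = min ω (r i)` that exactly exhausts
`min p_CS (∑ r i)` is feasible and fair (envy-free, Pareto efficient, proportional)
for a conventional FCS. -/
theorem waterfilling_fair_conventional {ι : Type*} (E : Finset ι) (hE : E.Nonempty)
    (pport pCS : ℝ) (hpport : 0 < pport) (hpCS : 0 < pCS)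
    (r : ι → ℝ) (hr : ∀ i ∈ E, 0 < r i ∧ r i ≤ pport)
    (u : ι → ℝ → ℝ) (hu : ∀ i, ∀ x : ℝ, u i x = min (x / r i) 1)
    (ω : ℝ) (hω : 0 ≤ ω)
    (p : ι → ℝ) (hp : ∀ i ∈ E, p i = min ω (r i))
    (hsum : ∑ i ∈ E, p i = min pCS (∑ i ∈ E, r i)) :
    -- feasibility
    ((∀ i ∈ E, 0 ≤ p i ∧ p i ≤ pport) ∧ ∑ i ∈ E, p i ≤ pCS) ∧
    -- (1) envy-freeness
    (∀ i ∈ E, ∀ j ∈ E, u i (p i) ≥ u i (p j)) ∧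
    -- (2) Pareto efficiency
    (∀ p' : ι → ℝ, (∀ i ∈ E, 0 ≤ p' i ∧ p' i ≤ pport) → (∑ i ∈ E, p' i ≤ pCS) →
      (∃ i ∈ E, u i (p' i) > u i (p i)) → ∃ k ∈ E, u k (p' k) < u k (p k)) ∧
    -- (3) proportionality
    (∀ i ∈ E, u i (p i) ≥ u i pCS / (E.card : ℝ)) :=
  waterfilling_fair_conventional_general E pport pCS r hr u hu ω hω p hp hsum
end

section
/- Let E be a nonempty finite set of EVs, p_port > 0 the port rating, p_CS > 0 the station power cap, and for each i ∈ E let r_i be a real request with 0 < r_i ≤ p_port, each EV i having utility u_i(x) = min(x / r_i, 1). Then there exists a feasible allocation p : E → ℝ (i.e. 0 ≤ p_i ≤ p_port for all i and ∑_{i∈E} p_i ≤ p_CS) that is envy-free, Pareto efficient, and proportional. -/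
/-!
Water filling: every EV receives `min rᵢ θ`, where the common level `θ` is chosen (by the
intermediate value theorem) so that the total equals `min p_CS (∑ rᵢ)`. Nobody envies another
EV, since nobody receives more than `θ`. If some EV is not fully served, the cap is exhausted, so
raising one EV's power forces lowering another's (Pareto efficiency), and `|E| θ ≥ p_CS` gives
every EV at least the `1/|E|` share of the utility of the whole station (proportionality).
-/

open Finset

noncomputable def utility (r x : ℝ) : ℝ := min (x / r) 1

section Utility

variable {r x y : ℝ}

theorem utility_le_one : utility r x ≤ 1 := min_le_right _ _

theorem utility_eq_div (hr : 0 < r) (hx : x ≤ r) : utility r x = x / r :=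
  min_eq_left ((div_le_one hr).mpr hx)

theorem utility_self (hr : 0 < r) : utility r r = 1 := by
  rw [utility, div_self hr.ne', min_self]

theorem utility_mono (hr : 0 < r) : Monotone (utility r) := fun _ _ hxy =>
  min_le_min_right 1 (div_le_div_of_nonneg_right hxy hr.le)

theorem utility_min_self (hr : 0 < r) (θ : ℝ) : utility r (min r θ) = utility r θ := by
  rcases le_total r θ with h | h
  · rw [min_eq_left h, utility_self hr]
    exact le_antisymm (utility_self hr ▸ utility_mono hr h) utility_le_one
  · rw [min_eq_right h]

theorem le_of_utility_le (hr : 0 < r) (hx : x ≤ r) (h : utility r x ≤ utility r y) : x ≤ y :=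
  (div_le_div_iff_of_pos_right hr).mp <| (utility_eq_div hr hx).symm.trans_le h |>.trans
    (min_le_left _ _)

theorem lt_of_utility_lt (hr : 0 < r) (h : utility r x < utility r y) : x < y :=
  (utility_mono hr).reflect_lt h

theorem lt_of_utility_lt_one (hr : 0 < r) (h : utility r x < 1) : x < r := by
  by_contra! hx
  exact h.not_ge (utility_self hr ▸ utility_mono hr hx)

end Utility

def waterFill {ι : Type*} (r : ι → ℝ) (θ : ℝ) (i : ι) : ℝ := min (r i) θ

namespace waterFill

variable {ι : Type*} {E : Finset ι} {r : ι → ℝ} {θ c : ℝ}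

theorem exists_level (hr : ∀ i ∈ E, 0 ≤ r i) (hc : 0 ≤ c) :
    ∃ θ, 0 ≤ θ ∧ ∑ i ∈ E, waterFill r θ i = min c (∑ i ∈ E, r i) := by
  set S := ∑ i ∈ E, r i
  have hS : 0 ≤ S := sum_nonneg hr
  have hcont : Continuous fun θ => ∑ i ∈ E, waterFill r θ i :=
    continuous_finsetSum _ fun i _ => continuous_const.min continuous_id
  have hzero : ∑ i ∈ E, waterFill r 0 i = 0 :=
    sum_eq_zero fun i hi => min_eq_right (hr i hi)
  have htop : ∑ i ∈ E, waterFill r S i = S :=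
    sum_congr rfl fun i hi => min_eq_left (single_le_sum hr hi)
  have hmem : min c S ∈ Set.Icc (∑ i ∈ E, waterFill r 0 i) (∑ i ∈ E, waterFill r S i) := by
    rw [hzero, htop]
    exact ⟨le_min hc hS, min_le_right _ _⟩
  obtain ⟨θ, ⟨hθ0, -⟩, hθ⟩ := intermediate_value_Icc hS hcont.continuousOn hmem
  exact ⟨θ, hθ0, hθ⟩

theorem sum_le_card_mul : ∑ i ∈ E, waterFill r θ i ≤ #E * θ := by
  simpa [waterFill] using sum_le_sum fun i (_ : i ∈ E) => min_le_right (r i) θ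

theorem sum_eq_of_lt (hθ : ∑ i ∈ E, waterFill r θ i = min c (∑ i ∈ E, r i))
    {i : ι} (hi : i ∈ E) (hlt : waterFill r θ i < r i) : ∑ i ∈ E, waterFill r θ i = c := by
  have hsum : ∑ i ∈ E, waterFill r θ i < ∑ i ∈ E, r i :=
    sum_lt_sum (fun j _ => min_le_left _ _) ⟨i, hi, hlt⟩
  rw [hθ] at hsum ⊢
  exact min_eq_left ((min_lt_iff.mp hsum).resolve_right (lt_irrefl _)).le

theorem utility_le {i : ι} (hr : 0 < r i) (j : ι) :
    utility (r i) (waterFill r θ j) ≤ utility (r i) (waterFill r θ i) := by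
  rw [waterFill, waterFill, utility_min_self hr]
  exact utility_mono hr (min_le_right _ _)

theorem exists_utility_lt (hr : ∀ i ∈ E, 0 < r i)
    (hθ : ∑ i ∈ E, waterFill r θ i = min c (∑ i ∈ E, r i))
    (p : ι → ℝ) (hp : ∑ i ∈ E, p i ≤ c) {i : ι} (hi : i ∈ E)
    (hgain : utility (r i) (waterFill r θ i) < utility (r i) (p i)) :
    ∃ k ∈ E, utility (r k) (p k) < utility (r k) (waterFill r θ k) := by
  by_contra! hnoloss
  have hle : ∀ k ∈ E, waterFill r θ k ≤ p k := fun k hk =>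
    le_of_utility_le (hr k hk) (min_le_left _ _) (hnoloss k hk)
  have hcap :=
    sum_eq_of_lt hθ hi (lt_of_utility_lt_one (hr i hi) (hgain.trans_le utility_le_one))
  have := sum_lt_sum hle ⟨i, hi, lt_of_utility_lt (hr i hi) hgain⟩
  linarith

theorem utility_div_card_le (hr : ∀ i ∈ E, 0 < r i)
    (hθ : ∑ i ∈ E, waterFill r θ i = min c (∑ i ∈ E, r i)) {i : ι} (hi : i ∈ E) :
    utility (r i) c / #E ≤ utility (r i) (waterFill r θ i) := by
  have hri := hr i hi
  have hcard : (0 : ℝ) < #E := by exact_mod_cast card_pos.mpr ⟨i, hi⟩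
  rcases le_or_gt (r i) θ with hfull | hpart
  · rw [waterFill, min_eq_left hfull, utility_self hri]
    exact div_le_one_of_le₀ (utility_le_one.trans (by exact_mod_cast hcard)) hcard.le
  · have hcap : c ≤ #E * θ :=
      sum_eq_of_lt hθ hi (by rwa [waterFill, min_eq_right hpart.le]) ▸ sum_le_card_mul
    rw [div_le_iff₀ hcard, waterFill, min_eq_right hpart.le, utility_eq_div hri hpart.le]
    calc utility (r i) c ≤ c / r i := min_le_left _ _
      _ ≤ #E * θ / r i := div_le_div_of_nonneg_right hcap hri.le
      _ = θ / r i * #E := by ring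

end waterFill

theorem exists_fair_allocation_conventional_general {ι : Type*} (E : Finset ι)
    (pport pCS : ℝ) (hpCS : 0 < pCS)
    (r : ι → ℝ) (hr : ∀ i ∈ E, 0 < r i ∧ r i ≤ pport)
    (u : ι → ℝ → ℝ) (hu : ∀ i, ∀ x : ℝ, u i x = min (x / r i) 1) :
    ∃ p : ι → ℝ,
      -- feasibility
      ((∀ i ∈ E, 0 ≤ p i ∧ p i ≤ pport) ∧ ∑ i ∈ E, p i ≤ pCS) ∧
      -- envy-freeness
      (∀ i ∈ E, ∀ j ∈ E, u i (p i) ≥ u i (p j)) ∧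
      -- Pareto efficiency
      (∀ p' : ι → ℝ, (∀ i ∈ E, 0 ≤ p' i ∧ p' i ≤ pport) → (∑ i ∈ E, p' i ≤ pCS) →
        (∃ i ∈ E, u i (p' i) > u i (p i)) → ∃ k ∈ E, u k (p' k) < u k (p k)) ∧
      -- proportionality
      (∀ i ∈ E, u i (p i) ≥ u i pCS / (E.card : ℝ)) := by
  obtain rfl : u = fun i => utility (r i) := funext₂ hu
  have hrpos : ∀ i ∈ E, 0 < r i := fun i hi => (hr i hi).1
  obtain ⟨θ, hθ0, hθ⟩ := waterFill.exists_level (fun i hi => (hrpos i hi).le) hpCS.le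
  refine ⟨waterFill r θ, ⟨fun i hi => ⟨le_min (hrpos i hi).le hθ0, ?_⟩, hθ ▸ min_le_left _ _⟩,
    fun i hi j _ => waterFill.utility_le (hrpos i hi) j,
    fun p' _ hp' ⟨i, hi, hgain⟩ => waterFill.exists_utility_lt hrpos hθ p' hp' hi hgain,
    fun i hi => waterFill.utility_div_card_le hrpos hθ hi⟩
  exact (min_le_left _ _).trans (hr i hi).2

/-- For a conventional FCS there always exists a feasible allocation
that is envy-free, Pareto efficient, and proportional. -/
theorem exists_fair_allocation_conventional {ι : Type*} (E : Finset ι) (hE : E.Nonempty)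
    (pport pCS : ℝ) (hpport : 0 < pport) (hpCS : 0 < pCS)
    (r : ι → ℝ) (hr : ∀ i ∈ E, 0 < r i ∧ r i ≤ pport)
    (u : ι → ℝ → ℝ) (hu : ∀ i, ∀ x : ℝ, u i x = min (x / r i) 1) :
    ∃ p : ι → ℝ,
      -- feasibility
      ((∀ i ∈ E, 0 ≤ p i ∧ p i ≤ pport) ∧ ∑ i ∈ E, p i ≤ pCS) ∧
      -- envy-freeness
      (∀ i ∈ E, ∀ j ∈ E, u i (p i) ≥ u i (p j)) ∧
      -- Pareto efficiency
      (∀ p' : ι → ℝ, (∀ i ∈ E, 0 ≤ p' i ∧ p' i ≤ pport) → (∑ i ∈ E, p' i ≤ pCS) →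
        (∃ i ∈ E, u i (p' i) > u i (p i)) → ∃ k ∈ E, u k (p' k) < u k (p k)) ∧
      -- proportionality
      (∀ i ∈ E, u i (p i) ≥ u i pCS / (E.card : ℝ)) :=
  exists_fair_allocation_conventional_general E pport pCS hpCS r hr u hu
end

section
/- Let E be a nonempty finite set, p_port > 0, p_CS > 0, and let r_i ∈ (0, p_port] be real requests for i ∈ E, with utilities u_i(x) = min(x / r_i, 1). Let p : E → ℝ be an allocation satisfying 0 ≤ p_i ≤ r_i for all i ∈ E and ∑_{i∈E} p_i = min(p_CS, ∑_{i∈E} r_i). Then p is Pareto efficient: for every allocation p' : E → ℝ with 0 ≤ p'_i ≤ p_port for all i and ∑_{i∈E} p'_i ≤ p_CS, if u_i(p'_i) > u_i(p_i) for some i ∈ E, then u_k(p'_k) < u_k(p_k) for some k ∈ E. -/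
/-! If some EV gained and none lost, then `p ≤ p'` with strict inequality at the gaining EV,
whose request is moreover unmet (`p i < r i`). The first fact gives `∑ p < ∑ p' ≤ p_CS`, the
second `∑ p < ∑ r`, so `∑ p` lies strictly below `min p_CS (∑ r)`, which it equals. -/

lemma le_of_min_div_le_min_div {p x r : ℝ} (hr : 0 < r) (hpr : p ≤ r)
    (h : min (p / r) 1 ≤ min (x / r) 1) : p ≤ x := by
  rw [min_eq_left ((div_le_one hr).mpr hpr), le_min_iff] at h
  exact (div_le_div_iff_of_pos_right hr).mp h.1

lemma lt_of_min_div_lt_min_div {p x r : ℝ} (hr : 0 < r)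
    (h : min (p / r) 1 < min (x / r) 1) : p < x ∧ p < r := by
  have hp : p / r < 1 := (min_lt_iff.mp (h.trans_le (min_le_right _ _))).resolve_right (lt_irrefl 1)
  rw [min_eq_left hp.le] at h
  exact ⟨(div_lt_div_iff_of_pos_right hr).mp (h.trans_le (min_le_left _ _)),
    (div_lt_one hr).mp hp⟩

theorem pareto_efficient_conventional_general {ι : Type*} (E : Finset ι)
    (pport pCS : ℝ)
    (r : ι → ℝ) (hr : ∀ i ∈ E, 0 < r i ∧ r i ≤ pport)
    (u : ι → ℝ → ℝ) (hu : ∀ i, ∀ x : ℝ, u i x = min (x / r i) 1)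
    (p : ι → ℝ) (hp : ∀ i ∈ E, 0 ≤ p i ∧ p i ≤ r i)
    (hsum : ∑ i ∈ E, p i = min pCS (∑ i ∈ E, r i)) :
    ∀ p' : ι → ℝ, (∀ i ∈ E, 0 ≤ p' i ∧ p' i ≤ pport) → (∑ i ∈ E, p' i ≤ pCS) →
      (∃ i ∈ E, u i (p' i) > u i (p i)) → ∃ k ∈ E, u k (p' k) < u k (p k) := by
  intro p' _ hsum' ⟨i, hi, hgain⟩
  by_contra! hloss
  simp only [hu] at hgain hloss
  obtain ⟨hpp'i, hpri⟩ := lt_of_min_div_lt_min_div (hr i hi).1 hgain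
  have hpp' : ∀ k ∈ E, p k ≤ p' k := fun k hk =>
    le_of_min_div_le_min_div (hr k hk).1 (hp k hk).2 (hloss k hk)
  have hcap : ∑ k ∈ E, p k < pCS :=
    (Finset.sum_lt_sum hpp' ⟨i, hi, hpp'i⟩).trans_le hsum'
  have hreq : ∑ k ∈ E, p k < ∑ k ∈ E, r k :=
    Finset.sum_lt_sum (fun k hk => (hp k hk).2) ⟨i, hi, hpri⟩
  exact (lt_min hcap hreq).ne hsum

/-- Any allocation with `0 ≤ p i ≤ r i` that exactly exhausts
`min p_CS (∑ r i)` is Pareto efficient among feasible allocations. -/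
theorem pareto_efficient_conventional {ι : Type*} (E : Finset ι) (hE : E.Nonempty)
    (pport pCS : ℝ) (hpport : 0 < pport) (hpCS : 0 < pCS)
    (r : ι → ℝ) (hr : ∀ i ∈ E, 0 < r i ∧ r i ≤ pport)
    (u : ι → ℝ → ℝ) (hu : ∀ i, ∀ x : ℝ, u i x = min (x / r i) 1)
    (p : ι → ℝ) (hp : ∀ i ∈ E, 0 ≤ p i ∧ p i ≤ r i)
    (hsum : ∑ i ∈ E, p i = min pCS (∑ i ∈ E, r i)) :
    ∀ p' : ι → ℝ, (∀ i ∈ E, 0 ≤ p' i ∧ p' i ≤ pport) → (∑ i ∈ E, p' i ≤ pCS) →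
      (∃ i ∈ E, u i (p' i) > u i (p i)) → ∃ k ∈ E, u k (p' k) < u k (p k) :=
  pareto_efficient_conventional_general E pport pCS r hr u hu p hp hsum
end

section
/- Let n ≥ 1 be a natural number, let C and r_1, …, r_n be real numbers, and for each k ∈ {1, …, n} define ω_k = (C − ∑_{i=1}^{k−1} r_i) / (n − k + 1). Fix t ∈ {1, …, n} and suppose that r_k ≤ ω_k for every k ∈ {1, …, t−1}. Then the sequence of water levels is nondecreasing up to index t: ω_1 ≤ ω_2 ≤ ⋯ ≤ ω_t. In particular, ω_t ≥ ω_1 = C / n, and ω_t ≥ r_k for every k ∈ {1, …, t−1}. -/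
/-!
Fulfilling EV `k` takes `r k ≤ ω k` out of the residual capacity, which is then shared among one
EV fewer; taking at most the current equal share cannot lower the share of the others, so
`ω k ≤ ω (k + 1)` for every fulfilled `k`, and monotonicity on `{1, …, t}` follows by chaining.
-/

open Finset

noncomputable def waterLevel (n : ℕ) (C : ℝ) (r : ℕ → ℝ) (k : ℕ) : ℝ :=
  (C - ∑ i ∈ Ico 1 k, r i) / ((n : ℝ) - (k : ℝ) + 1)

lemma div_add_one_le_sub_div_of_le {a x m : ℝ} (hm : 0 < m) (hx : x ≤ a / (m + 1)) :
    a / (m + 1) ≤ (a - x) / m := by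
  have hm1 : m + 1 ≠ 0 := by positivity
  calc a / (m + 1) = (a - a / (m + 1)) / m := by field_simp; ring
    _ ≤ (a - x) / m := by gcongr

namespace waterLevel

variable {n : ℕ} {C : ℝ} {r : ℕ → ℝ}

lemma one : waterLevel n C r 1 = C / n := by
  simp [waterLevel]

lemma le_succ {k : ℕ} (hk : 1 ≤ k) (hkn : k < n) (hfulfilled : r k ≤ waterLevel n C r k) :
    waterLevel n C r k ≤ waterLevel n C r (k + 1) := by
  have hpos : (0 : ℝ) < n - (k + 1 : ℕ) + 1 := by
    have : ((k + 1 : ℕ) : ℝ) ≤ n := by exact_mod_cast hkn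
    linarith
  have hshift : (n : ℝ) - k + 1 = (n - (k + 1 : ℕ) + 1) + 1 := by push_cast; ring
  unfold waterLevel at hfulfilled ⊢
  rw [hshift] at hfulfilled ⊢
  rw [sum_Ico_succ_top hk, ← sub_sub]
  exact div_add_one_le_sub_div_of_le hpos hfulfilled

lemma monotoneOn {t : ℕ} (htn : t ≤ n)
    (hfulfilled : ∀ k, 1 ≤ k → k < t → r k ≤ waterLevel n C r k) :
    MonotoneOn (waterLevel n C r) (Set.Icc 1 t) := by
  refine monotoneOn_of_le_succ Set.ordConnected_Icc fun k _ hk hsucc => ?_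
  rw [Order.succ_eq_add_one] at hsucc ⊢
  have hkt : k < t := hsucc.2
  exact le_succ hk.1 (hkt.trans_le htn) (hfulfilled k hk.1 hkt)

end waterLevel

theorem water_level_monotone_general (n : ℕ) (C : ℝ) (r : ℕ → ℝ)
    (ω : ℕ → ℝ)
    (hω : ∀ k, ω k = (C - ∑ i ∈ Finset.Ico 1 k, r i) / ((n : ℝ) - (k : ℝ) + 1))
    (t : ℕ) (ht1 : 1 ≤ t) (htn : t ≤ n)
    (hfulfilled : ∀ k, 1 ≤ k → k < t → r k ≤ ω k) :
    (∀ k l, 1 ≤ k → k ≤ l → l ≤ t → ω k ≤ ω l) ∧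
    ω 1 = C / (n : ℝ) ∧
    ω t ≥ C / (n : ℝ) ∧
    (∀ k, 1 ≤ k → k < t → ω t ≥ r k) := by
  obtain rfl : ω = waterLevel n C r := funext hω
  have hmono : ∀ k l, 1 ≤ k → k ≤ l → l ≤ t → waterLevel n C r k ≤ waterLevel n C r l :=
    fun k l hk hkl hlt =>
      waterLevel.monotoneOn htn hfulfilled ⟨hk, hkl.trans hlt⟩ ⟨hk.trans hkl, hlt⟩ hkl
  refine ⟨hmono, waterLevel.one, ?_, fun k hk hkt => ?_⟩
  · exact waterLevel.one.symm.trans_le (hmono 1 t le_rfl ht1 le_rfl)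
  · exact (hfulfilled k hk hkt).trans (hmono k t hk hkt.le le_rfl)

/-- Monotonicity of the water levels in the progressive-filling analysis.
With `ω k = (C − ∑_{i=1}^{k−1} r i) / (n − k + 1)`, if each EV `k < t` was fulfilled
(`r k ≤ ω k`), then `ω` is nondecreasing on `{1, …, t}`; in particular
`ω 1 = C / n`, `ω t ≥ C / n`, and `ω t ≥ r k` for every `k < t`. -/
theorem water_level_monotone (n : ℕ) (hn : 1 ≤ n) (C : ℝ) (r : ℕ → ℝ)
    (ω : ℕ → ℝ)
    (hω : ∀ k, ω k = (C - ∑ i ∈ Finset.Ico 1 k, r i) / ((n : ℝ) - (k : ℝ) + 1))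
    (t : ℕ) (ht1 : 1 ≤ t) (htn : t ≤ n)
    (hfulfilled : ∀ k, 1 ≤ k → k < t → r k ≤ ω k) :
    (∀ k l, 1 ≤ k → k ≤ l → l ≤ t → ω k ≤ ω l) ∧
    ω 1 = C / (n : ℝ) ∧
    ω t ≥ C / (n : ℝ) ∧
    (∀ k, 1 ≤ k → k < t → ω t ≥ r k) :=
  water_level_monotone_general n C r ω hω t ht1 htn hfulfilled
end

section
/- Let n_port ≥ 1 and m_port ≥ 1 be natural numbers, let m_CS be a natural number satisfying the minimum station capacity condition m_CS ≥ m_port + (n_port − 1), let E be a nonempty finite set of EVs with |E| ≤ n_port, and let r_i be real module requests with 0 < r_i ≤ m_port for each i ∈ E, each EV i having utility u_i(x) = min(x / r_i, 1) for x ≥ 0 and u_i(x) = 0 for x < 0. Then there exists an integer allocation m : E → ℕ with m_i ≤ m_port for all i and ∑_{i∈E} m_i ≤ m_CS, which is simultaneously: (1) envy-free up to one module (EF1): u_i(m_i) ≥ u_i(m_j − 1) for all i, j ∈ E; (2) Pareto efficient among feasible integer allocations: for every m' : E → ℕ with m'_i ≤ m_port for all i and ∑_{i∈E} m'_i ≤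 m_CS, if u_i(m'_i) > u_i(m_i) for some i then u_k(m'_k) < u_k(m_k) for some k; and (3) proportional: u_i(m_i) ≥ u_i(m_CS) / |E| for all i ∈ E. -/
/-!
Allocate modules greedily, one at a time, to a poorest EV that is still below its integer
demand `⌈r i⌉₊`. The result never exceeds a demand, and while some EV `i` stays below its demand,
all `m_CS` modules are in use and nobody holds more than `m i + 1`. EF1 follows since utilities
are monotone. Pareto efficiency holds because below its demand an EV's utility is strictly
increasing, so a Pareto improvement would need more than `m_CS` modules. For proportionality,
`m_CS < |E| (m i + 1)` together with `m_CS ≥ m_port + n_port - 1` and `|E| ≤ n_port` gives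
`|E| m i ≥ m_port ≥ r i`, i.e. `u i (m i) ≥ 1 / |E|`.
-/

open Finset

noncomputable def cappedUtility (r x : ℝ) : ℝ := if 0 ≤ x then min (x / r) 1 else 0

section CappedUtility

variable {r x y : ℝ}

theorem cappedUtility_le_one : cappedUtility r x ≤ 1 := by
  unfold cappedUtility
  split_ifs
  · exact min_le_right _ _
  · exact zero_le_one

theorem cappedUtility_monotone (hr : 0 ≤ r) : Monotone (cappedUtility r) := by
  intro x y hxy
  unfold cappedUtility
  by_cases hx : 0 ≤ x
  · rw [if_pos hx, if_pos (hx.trans hxy)]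
    gcongr
  · rw [if_neg hx]
    split_ifs with hy
    · exact le_min (div_nonneg hy hr) zero_le_one
    · exact le_rfl

theorem cappedUtility_of_le (hr : 0 < r) (h : r ≤ x) : cappedUtility r x = 1 := by
  rw [cappedUtility, if_pos (hr.le.trans h), min_eq_right ((one_le_div hr).mpr h)]

theorem cappedUtility_of_nonneg_of_le (hx : 0 ≤ x) (h : x ≤ r) : cappedUtility r x = x / r := by
  rw [cappedUtility, if_pos hx, min_eq_left (div_le_one_of_le₀ h (hx.trans h))]

theorem cappedUtility_lt_of_lt (hr : 0 < r) (hx : 0 ≤ x) (hxr : x < r) (hxy : x < y) :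
    cappedUtility r x < cappedUtility r y := by
  rw [cappedUtility_of_nonneg_of_le hx hxr.le, cappedUtility, if_pos (hx.trans hxy.le)]
  exact lt_min (by gcongr) ((div_lt_one hr).mpr hxr)

end CappedUtility

structure IsWaterFilling {ι : Type*} (E : Finset ι) (c : ι → ℕ) (C : ℕ) (m : ι → ℕ) : Prop where
  le_demand : ∀ i ∈ E, m i ≤ c i
  sum_le : ∑ i ∈ E, m i ≤ C
  sum_eq_of_lt_demand : ∀ i ∈ E, m i < c i → ∑ j ∈ E, m j = C
  le_succ_of_lt_demand : ∀ i ∈ E, m i < c i → ∀ j ∈ E, m j ≤ m i + 1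

namespace IsWaterFilling

variable {ι : Type*} {E : Finset ι} {c : ι → ℕ} {C : ℕ} {m : ι → ℕ}

theorem zero (E : Finset ι) (c : ι → ℕ) : IsWaterFilling E c 0 0 where
  le_demand _ _ := Nat.zero_le _
  sum_le := by simp
  sum_eq_of_lt_demand _ _ _ := by simp
  le_succ_of_lt_demand _ _ _ _ _ := Nat.zero_le _

theorem of_forall_demand_le (h : IsWaterFilling E c C m) (hsat : ∀ i ∈ E, c i ≤ m i) (C' : ℕ)
    (hC : C ≤ C') : IsWaterFilling E c C' m where
  le_demand := h.le_demand
  sum_le := h.sum_le.trans hC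
  sum_eq_of_lt_demand i hi hlt := absurd (hsat i hi) hlt.not_ge
  le_succ_of_lt_demand i hi hlt := absurd (hsat i hi) hlt.not_ge

theorem add_single [DecidableEq ι] (h : IsWaterFilling E c C m) {i : ι} (hi : i ∈ E)
    (hlt : m i < c i) (hmin : ∀ k ∈ E, m k < c k → m i ≤ m k) :
    IsWaterFilling E c (C + 1) (m + Pi.single i 1 : ι → ℕ) := by
  have happly : ∀ j, (m + Pi.single i 1 : ι → ℕ) j = m j + if j = i then 1 else 0 := fun j => by
    simp only [Pi.add_apply, Pi.single_apply]
  have hsum : ∑ j ∈ E, (m + Pi.single i 1 : ι → ℕ) j = C + 1 := by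
    rw [sum_congr rfl fun j _ => happly j, sum_add_distrib, sum_ite_eq', if_pos hi,
      h.sum_eq_of_lt_demand i hi hlt]
  refine ⟨fun k hk => ?_, hsum.le, fun _ _ _ => hsum, fun k hk hk' j hj => ?_⟩
  · rw [happly]
    by_cases hki : k = i
    · subst hki; simpa using hlt
    · simpa [hki] using h.le_demand k hk
  · simp only [happly] at hk' ⊢
    have hij := h.le_succ_of_lt_demand i hi hlt j hj
    by_cases hki : k = i
    · subst hki
      rw [if_pos rfl]
      split_ifs <;> omega
    · rw [if_neg hki] at hk' ⊢
      have hk'' : m k < c k := by simpa using hk'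
      have hik := hmin k hk hk''
      by_cases hji : j = i
      · subst hji; simpa using hik
      · simpa [hji] using h.le_succ_of_lt_demand k hk hk'' j hj

theorem exists_succ (h : IsWaterFilling E c C m) : ∃ m', IsWaterFilling E c (C + 1) m' := by
  classical
  by_cases hsat : ∀ i ∈ E, c i ≤ m i
  · exact ⟨m, h.of_forall_demand_le hsat (C + 1) C.le_succ⟩
  push Not at hsat
  obtain ⟨i, hi, hmin⟩ := (E.filter fun i => m i < c i).exists_min_image m
    (by simpa [Finset.Nonempty] using hsat)
  rw [mem_filter] at hi
  exact ⟨_, h.add_single hi.1 hi.2 fun k hk hlt => hmin k (mem_filter.mpr ⟨hk, hlt⟩)⟩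

theorem _root_.exists_isWaterFilling (E : Finset ι) (c : ι → ℕ) (C : ℕ) :
    ∃ m, IsWaterFilling E c C m := by
  induction C with
  | zero => exact ⟨0, zero E c⟩
  | succ C ih =>
    obtain ⟨m, hm⟩ := ih
    exact hm.exists_succ

theorem lt_card_mul_succ (h : IsWaterFilling E c C m) {i : ι} (hi : i ∈ E) (hlt : m i < c i) :
    C < #E * (m i + 1) := by
  rw [← h.sum_eq_of_lt_demand i hi hlt, ← smul_eq_mul, ← sum_const]
  exact sum_lt_sum (h.le_succ_of_lt_demand i hi hlt) ⟨i, hi, Nat.lt_succ_self _⟩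

end IsWaterFilling

namespace IsWaterFilling

variable {ι : Type*} {E : Finset ι} {r : ι → ℝ} {C : ℕ} {m : ι → ℕ}

theorem cappedUtility_sub_one_le (h : IsWaterFilling E (fun i => ⌈r i⌉₊) C m) {i j : ι}
    (hi : i ∈ E) (hj : j ∈ E) (hri : 0 < r i) :
    cappedUtility (r i) ((m j : ℝ) - 1) ≤ cappedUtility (r i) (m i) := by
  rcases le_or_gt (r i) (m i) with hsat | hunsat
  · rw [cappedUtility_of_le hri hsat]
    exact cappedUtility_le_one
  · apply cappedUtility_monotone hri.le
    have hji : (m j : ℝ) ≤ m i + 1 := by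
      exact_mod_cast h.le_succ_of_lt_demand i hi (Nat.lt_ceil.mpr hunsat) j hj
    linarith

theorem exists_cappedUtility_lt (h : IsWaterFilling E (fun i => ⌈r i⌉₊) C m)
    (hr : ∀ i ∈ E, 0 < r i) {m' : ι → ℕ} (hm' : ∑ i ∈ E, m' i ≤ C) {i : ι} (hi : i ∈ E)
    (hlt : cappedUtility (r i) (m i) < cappedUtility (r i) (m' i)) :
    ∃ k ∈ E, cappedUtility (r k) (m' k) < cappedUtility (r k) (m k) := by
  by_contra! hcon
  have hle : ∀ k ∈ E, m k ≤ m' k := fun k hk => by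
    by_contra! hgt
    have hm'r : (m' k : ℝ) < r k := Nat.lt_ceil.mp (hgt.trans_le (h.le_demand k hk))
    exact (hcon k hk).not_gt
      (cappedUtility_lt_of_lt (hr k hk) (Nat.cast_nonneg _) hm'r (by exact_mod_cast hgt))
  have hmi : m i < m' i := by
    by_contra! hge
    exact hlt.not_ge (cappedUtility_monotone (hr i hi).le (by exact_mod_cast hge))
  have hunsat : m i < ⌈r i⌉₊ := by
    refine Nat.lt_ceil.mpr (lt_of_not_ge fun hsat => hlt.not_ge ?_)
    rw [cappedUtility_of_le (hr i hi) hsat]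
    exact cappedUtility_le_one
  have hsum := sum_lt_sum hle ⟨i, hi, hmi⟩
  rw [h.sum_eq_of_lt_demand i hi hunsat] at hsum
  omega

theorem cappedUtility_div_card_le (h : IsWaterFilling E (fun i => ⌈r i⌉₊) C m) {M n : ℕ}
    (hC : M + (n - 1) ≤ C) (hEn : #E ≤ n) {i : ι} (hi : i ∈ E) (hri : 0 < r i)
    (hrM : r i ≤ M) (x : ℝ) :
    cappedUtility (r i) x / #E ≤ cappedUtility (r i) (m i) := by
  have hE : 1 ≤ #E := card_pos.mpr ⟨i, hi⟩
  have hEpos : (0 : ℝ) < #E := by exact_mod_cast hE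
  calc cappedUtility (r i) x / #E ≤ 1 / #E := by gcongr; exact cappedUtility_le_one
    _ ≤ cappedUtility (r i) (m i) := ?_
  rcases le_or_gt (r i) (m i) with hsat | hunsat
  · rw [cappedUtility_of_le hri hsat]
    exact div_le_one_of_le₀ (by exact_mod_cast hE) hEpos.le
  · have hM : M ≤ #E * m i := by
      have hlt := h.lt_card_mul_succ hi (Nat.lt_ceil.mpr hunsat)
      rw [Nat.mul_succ] at hlt
      omega
    rw [cappedUtility_of_nonneg_of_le (Nat.cast_nonneg _) hunsat.le, div_le_div_iff₀ hEpos hri]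
    calc 1 * r i ≤ M := by rw [one_mul]; exact hrM
      _ ≤ m i * #E := by rw [mul_comm]; exact_mod_cast hM

end IsWaterFilling

theorem exists_fair_allocation_modular_general {ι : Type*}
    (nport mport : ℕ)
    (mCS : ℕ) (hcap : mport + (nport - 1) ≤ mCS)
    (E : Finset ι) (hEcard : E.card ≤ nport)
    (r : ι → ℝ) (hr : ∀ i ∈ E, 0 < r i ∧ r i ≤ (mport : ℝ))
    (u : ι → ℝ → ℝ)
    (hu : ∀ i, ∀ x : ℝ, u i x = if 0 ≤ x then min (x / r i) 1 else 0) :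
    ∃ m : ι → ℕ,
      -- feasibility
      ((∀ i ∈ E, m i ≤ mport) ∧ ∑ i ∈ E, m i ≤ mCS) ∧
      -- (1) EF1
      (∀ i ∈ E, ∀ j ∈ E, u i (m i : ℝ) ≥ u i ((m j : ℝ) - 1)) ∧
      -- (2) Pareto efficiency among feasible integer allocations
      (∀ m' : ι → ℕ, (∀ i ∈ E, m' i ≤ mport) → (∑ i ∈ E, m' i ≤ mCS) →
        (∃ i ∈ E, u i (m' i : ℝ) > u i (m i : ℝ)) →
        ∃ k ∈ E, u k (m' k : ℝ) < u k (m k : ℝ)) ∧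
      -- (3) proportionality
      (∀ i ∈ E, u i (m i : ℝ) ≥ u i (mCS : ℝ) / (E.card : ℝ)) := by
  obtain ⟨m, hm⟩ := exists_isWaterFilling E (fun i => ⌈r i⌉₊) mCS
  have hu' : ∀ i x, u i x = cappedUtility (r i) x := hu
  simp only [hu', ge_iff_le, gt_iff_lt]
  refine ⟨m, ⟨fun i hi => (hm.le_demand i hi).trans (Nat.ceil_le.mpr (hr i hi).2), hm.sum_le⟩,
    fun i hi j hj => hm.cappedUtility_sub_one_le hi hj (hr i hi).1,
    fun m' _ hm' ⟨i, hi, hlt⟩ => hm.exists_cappedUtility_lt (fun k hk => (hr k hk).1) hm' hi hlt,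
    fun i hi => hm.cappedUtility_div_card_le hcap hEcard hi (hr i hi).1 (hr i hi).2 _⟩

/-- Under the minimum station capacity assumption, a modular FCS
always admits a feasible integer module allocation that is EF1, Pareto efficient,
and proportional. -/
theorem exists_fair_allocation_modular {ι : Type*}
    (nport mport : ℕ) (hnport : 1 ≤ nport) (hmport : 1 ≤ mport)
    (mCS : ℕ) (hcap : mport + (nport - 1) ≤ mCS)
    (E : Finset ι) (hE : E.Nonempty) (hEcard : E.card ≤ nport)
    (r : ι → ℝ) (hr : ∀ i ∈ E, 0 < r i ∧ r i ≤ (mport : ℝ))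
    (u : ι → ℝ → ℝ)
    (hu : ∀ i, ∀ x : ℝ, u i x = if 0 ≤ x then min (x / r i) 1 else 0) :
    ∃ m : ι → ℕ,
      -- feasibility
      ((∀ i ∈ E, m i ≤ mport) ∧ ∑ i ∈ E, m i ≤ mCS) ∧
      -- (1) EF1
      (∀ i ∈ E, ∀ j ∈ E, u i (m i : ℝ) ≥ u i ((m j : ℝ) - 1)) ∧
      -- (2) Pareto efficiency among feasible integer allocations
      (∀ m' : ι → ℕ, (∀ i ∈ E, m' i ≤ mport) → (∑ i ∈ E, m' i ≤ mCS) →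
        (∃ i ∈ E, u i (m' i : ℝ) > u i (m i : ℝ)) →
        ∃ k ∈ E, u k (m' k : ℝ) < u k (m k : ℝ)) ∧
      -- (3) proportionality
      (∀ i ∈ E, u i (m i : ℝ) ≥ u i (mCS : ℝ) / (E.card : ℝ)) :=
  exists_fair_allocation_modular_general nport mport mCS hcap E hEcard r hr u hu
end

section
/- Let E be a nonempty finite set, m_port ≥ 1 and m_CS natural numbers, and let r_i be real module requests with 0 < r_i ≤ m_port for i ∈ E, with utilities u_i(x) = min(x / r_i, 1). Let m : E → ℕ satisfy m_i ≤ ⌈r_i⌉ for all i ∈ E and ∑_{i∈E} m_i = min(m_CS, ∑_{i∈E} ⌈r_i⌉). Then m is Pareto efficient among feasible integer allocations: for every m' : E → ℕ with m'_i ≤ m_port for all i and ∑_{i∈E} m'_i ≤ m_CS, if u_i(m'_i) > u_i(m_i) for some i ∈ E, then u_k(m'_k) < u_k(m_k) for some k ∈ E. -/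
/-!
If `m'` improves some EV without hurting any other, then `m' ≥ m` everywhere (an EV with
`m'ₖ < mₖ ≤ ⌈rₖ⌉` would be strictly below its request, hence worse off), and `m'ᵢ > mᵢ`
at an EV with `mᵢ < ⌈rᵢ⌉`. So `∑ m' > ∑ m`, which forces `∑ m = m_CS` because
`∑ m < ∑ ⌈r⌉`; then `m'` exceeds the station's capacity.
-/

theorem min_div_one_lt_min_div_one_iff {r a b : ℝ} (hr : 0 < r) :
    min (a / r) 1 < min (b / r) 1 ↔ a < b ∧ a < r := by
  constructor
  · intro h
    have ha : a / r < 1 := by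
      simpa using min_lt_iff.1 (h.trans_le (min_le_right _ _))
    rw [min_eq_left ha.le] at h
    exact ⟨(div_lt_div_iff_of_pos_right hr).1 (h.trans_le (min_le_left _ _)),
      (div_lt_one hr).1 ha⟩
  · rintro ⟨hab, ha⟩
    rw [min_eq_left ((div_lt_one hr).2 ha).le]
    exact lt_min ((div_lt_div_iff_of_pos_right hr).2 hab) ((div_lt_one hr).2 ha)

theorem Nat.lt_of_min_div_one_lt {r : ℝ} {m m' : ℕ} (hr : 0 < r)
    (h : min (m / r) 1 < min (m' / r) 1) : m < m' ∧ m < ⌈r⌉₊ := by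
  obtain ⟨hlt, hcap⟩ := (min_div_one_lt_min_div_one_iff hr).1 h
  exact ⟨mod_cast hlt, Nat.lt_ceil.2 hcap⟩

theorem Nat.le_of_min_div_one_le {r : ℝ} {m m' : ℕ} (hr : 0 < r) (hm : m ≤ ⌈r⌉₊)
    (h : min (m / r) 1 ≤ min (m' / r) 1) : m ≤ m' := by
  by_contra! hlt
  have hcap : (m' : ℝ) < r := Nat.lt_ceil.1 (hlt.trans_le hm)
  exact h.not_gt ((min_div_one_lt_min_div_one_iff hr).2 ⟨mod_cast hlt, hcap⟩)

theorem Finset.lt_sum_of_le_of_sum_eq_min {ι : Type*} {E : Finset ι} {c m m' : ι → ℕ}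
    {M : ℕ} {i : ι} (hm : ∀ k ∈ E, m k ≤ c k) (hsum : ∑ k ∈ E, m k = min M (∑ k ∈ E, c k))
    (hle : ∀ k ∈ E, m k ≤ m' k) (hi : i ∈ E) (hlt : m i < m' i) (hcap : m i < c i) :
    M < ∑ k ∈ E, m' k := by
  have hm' : ∑ k ∈ E, m k < ∑ k ∈ E, m' k := Finset.sum_lt_sum hle ⟨i, hi, hlt⟩
  have hc : ∑ k ∈ E, m k < ∑ k ∈ E, c k := Finset.sum_lt_sum hm ⟨i, hi, hcap⟩
  omega

theorem pareto_efficient_modular_general {ι : Type*} (E : Finset ι)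
    (mport mCS : ℕ)
    (r : ι → ℝ) (hr : ∀ i ∈ E, 0 < r i ∧ r i ≤ (mport : ℝ))
    (u : ι → ℝ → ℝ) (hu : ∀ i, ∀ x : ℝ, u i x = min (x / r i) 1)
    (m : ι → ℕ) (hm : ∀ i ∈ E, m i ≤ ⌈r i⌉₊)
    (hsum : ∑ i ∈ E, m i = min mCS (∑ i ∈ E, ⌈r i⌉₊)) :
    ∀ m' : ι → ℕ, (∀ i ∈ E, m' i ≤ mport) → (∑ i ∈ E, m' i ≤ mCS) →
      (∃ i ∈ E, u i (m' i : ℝ) > u i (m i : ℝ)) →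
      ∃ k ∈ E, u k (m' k : ℝ) < u k (m k : ℝ) := by
  intro m' _ hbudget ⟨i, hi, hgain⟩
  by_contra! hnoloss
  simp only [hu] at hgain hnoloss
  obtain ⟨hlt, hcap⟩ := Nat.lt_of_min_div_one_lt (hr i hi).1 hgain
  have hle : ∀ k ∈ E, m k ≤ m' k := fun k hk =>
    Nat.le_of_min_div_one_le (hr k hk).1 (hm k hk) (hnoloss k hk)
  exact (Finset.lt_sum_of_le_of_sum_eq_min hm hsum hle hi hlt hcap).not_ge hbudget

/-- Any integer allocation with `m i ≤ ⌈r i⌉` that exactly exhausts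
`min m_CS (∑ ⌈r i⌉)` is Pareto efficient among feasible integer allocations. -/
theorem pareto_efficient_modular {ι : Type*} (E : Finset ι) (hE : E.Nonempty)
    (mport mCS : ℕ) (hmport : 1 ≤ mport)
    (r : ι → ℝ) (hr : ∀ i ∈ E, 0 < r i ∧ r i ≤ (mport : ℝ))
    (u : ι → ℝ → ℝ) (hu : ∀ i, ∀ x : ℝ, u i x = min (x / r i) 1)
    (m : ι → ℕ) (hm : ∀ i ∈ E, m i ≤ ⌈r i⌉₊)
    (hsum : ∑ i ∈ E, m i = min mCS (∑ i ∈ E, ⌈r i⌉₊)) :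
    ∀ m' : ι → ℕ, (∀ i ∈ E, m' i ≤ mport) → (∑ i ∈ E, m' i ≤ mCS) →
      (∃ i ∈ E, u i (m' i : ℝ) > u i (m i : ℝ)) →
      ∃ k ∈ E, u k (m' k : ℝ) < u k (m k : ℝ) :=
  pareto_efficient_modular_general E mport mCS r hr u hu m hm hsum
end

section
/- Let n ≥ 1, M, and k be natural numbers, let r > 0 be a real number with (M : ℝ) ≥ r + (n − 1), and let u(x) = min(x / r, 1). If k ≥ ⌊M / n⌋ (natural-number division), then u(k) ≥ u(M) / n, i.e. min(k / r, 1) ≥ (1/n) · min(M / r, 1). -/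
/-! Since `M < n * (⌊M / n⌋ + 1)`, the capacity bound gives `r ≤ M - (n - 1) ≤ n * k`, so
`k / r ≥ 1 / n`; and `1 / n` already dominates `u(M) / n` because `u ≤ 1`. -/

theorem one_div_le_min_div_one {n : ℕ} {r k : ℝ} (hr : 0 < r) (h : r ≤ n * k) :
    1 / (n : ℝ) ≤ min (k / r) 1 := by
  have hn : (0 : ℝ) < n := by
    refine Nat.cast_pos.mpr (Nat.pos_of_ne_zero ?_)
    rintro rfl
    simp only [Nat.cast_zero, zero_mul] at h
    linarith
  refine le_min ?_ ((one_div _).trans_le (Nat.cast_inv_le_one n))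
  rw [div_le_div_iff₀ hn hr]
  linarith

theorem floor_share_utility_general (n M k : ℕ) (r : ℝ) (hr : 0 < r)
    (hM : (M : ℝ) ≥ r + ((n : ℝ) - 1)) (hk : M / n ≤ k) :
    min ((k : ℝ) / r) 1 ≥ (1 / (n : ℝ)) * min ((M : ℝ) / r) 1 := by
  obtain rfl | hn := n.eq_zero_or_pos
  -- `1 / (0 : ℝ) = 0`, so the right-hand side vanishes
  · simp only [Nat.cast_zero, div_zero, zero_mul, ge_iff_le]
    exact le_min (by positivity) zero_le_one
  have hMk : (M : ℝ) + 1 ≤ n * (k + 1) := by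
    exact_mod_cast (Nat.lt_mul_div_succ M hn).trans_le (by gcongr)
  calc (1 / (n : ℝ)) * min ((M : ℝ) / r) 1 ≤ 1 / n :=
        mul_le_of_le_one_right (by positivity) (min_le_right _ _)
    _ ≤ min ((k : ℝ) / r) 1 := one_div_le_min_div_one hr (by linarith)

/-- If an EV with request `r` receives at least `⌊M / n⌋` modules and
`(M : ℝ) ≥ r + (n − 1)`, then its utility is at least a `1/n` fraction of the
utility it would obtain from all `M` modules. -/
theorem floor_share_utility (n M k : ℕ) (hn : 1 ≤ n) (r : ℝ) (hr : 0 < r)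
    (hM : (M : ℝ) ≥ r + ((n : ℝ) - 1)) (hk : M / n ≤ k) :
    min ((k : ℝ) / r) 1 ≥ (1 / (n : ℝ)) * min ((M : ℝ) / r) 1 :=
  floor_share_utility_general n M k r hr hM hk
end
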